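/- arXiv:2101.10725 — 7 statements merged into one kernel-verified Lean document; each statement's English description precedes it below -/
import Mathlib

section
/- Let φ̄ ∈ X and suppose φ : [0,∞) → X is differentiable and satisfies the exact-data asymptotic-regularization flow φ'(t) = −L*(L φ(t) − L φ̄) for all t ≥ 0. Then the residual is square-integrable over the whole half-line, with the explicit bound ∫₀^∞ ‖L φ(t) − L φ̄‖² dt ≤ (1/2) ‖φ(0) − φ̄‖² < ∞. -/
/-! The squared distance `V(t) = ½‖φ(t) − φ̄‖²` to the exact solution is a Lyapunov function
of the flow: `V' = −⟪φ − φ̄, L*L(φ − φ̄)⟫ = −‖Lφ − Lφ̄‖²`. Integrating over `[0, T]` gives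
`∫₀ᵀ ‖Lφ − Lφ̄‖² = V(0) − V(T) ≤ V(0)`, and letting `T → ∞` (the integrand is nonnegative)
yields integrability over the half-line together with the bound. -/

open MeasureTheory Set Filter
open scoped InnerProductSpace

theorem integrableOn_Ioi_and_integral_le_of_intervalIntegral_le {f : ℝ → ℝ} {a C : ℝ}
    (hf : ∀ x ∈ Ici a, 0 ≤ f x) (hfi : ∀ T, IntegrableOn f (Ioc a T))
    (hbound : ∀ T, a ≤ T → ∫ x in a..T, f x ≤ C) :
    IntegrableOn f (Ioi a) ∧ ∫ x in Ioi a, f x ≤ C := by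
  have hnorm : ∀ T, a ≤ T → ∫ x in a..T, ‖f x‖ = ∫ x in a..T, f x := fun T hT =>
    intervalIntegral.integral_congr fun x hx =>
      Real.norm_of_nonneg (hf x (by rw [uIcc_of_le hT] at hx; exact hx.1))
  have hint : IntegrableOn f (Ioi a) :=
    integrableOn_Ioi_of_intervalIntegral_norm_bounded C a hfi tendsto_id
      (by filter_upwards [eventually_ge_atTop a] with T hT
          exact (hnorm T hT).trans_le (hbound T hT))
  refine ⟨hint, le_of_tendsto (intervalIntegral_tendsto_integral_Ioi a hint tendsto_id) ?_⟩
  filter_upwards [eventually_ge_atTop a] with T hT using hbound T hT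

theorem integrableOn_Ioi_and_integral_le_of_hasDerivAt_of_le {g g' : ℝ → ℝ} {a B : ℝ}
    (hderiv : ∀ x ∈ Ici a, HasDerivAt g (g' x) x) (hg' : ∀ x ∈ Ici a, 0 ≤ g' x)
    (hg : ∀ x ∈ Ici a, g x ≤ B) :
    IntegrableOn g' (Ioi a) ∧ ∫ x in Ioi a, g' x ≤ B - g a := by
  have hcont : ∀ T, ContinuousOn g (Icc a T) := fun T x hx =>
    (hderiv x hx.1).continuousAt.continuousWithinAt
  have hderiv' : ∀ T, ∀ x ∈ Ioo a T, HasDerivAt g (g' x) x := fun T x hx =>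
    hderiv x (le_of_lt hx.1)
  have hfi : ∀ T, IntegrableOn g' (Ioc a T) := fun T =>
    intervalIntegral.integrableOn_deriv_of_nonneg (hcont T) (hderiv' T) fun x hx => hg' x (le_of_lt hx.1)
  refine integrableOn_Ioi_and_integral_le_of_intervalIntegral_le hg' hfi fun T hT => ?_
  rw [intervalIntegral.integral_eq_sub_of_hasDerivAt_of_le hT (hcont T) (hderiv' T)
    ((intervalIntegrable_iff_integrableOn_Ioc_of_le hT).mpr (hfi T))]
  linarith [hg T hT]

section Hilbert

variable {X Y : Type*} [NormedAddCommGroup X] [InnerProductSpace ℝ X] [CompleteSpace X]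
  [NormedAddCommGroup Y] [InnerProductSpace ℝ Y] [CompleteSpace Y]

theorem ContinuousLinearMap.inner_adjoint_apply_self (L : X →L[ℝ] Y) (x : X) :
    ⟪x, L.adjoint (L x)⟫_ℝ = ‖L x‖ ^ 2 := by
  rw [L.adjoint_inner_right, real_inner_self_eq_norm_sq]

theorem hasDerivAt_neg_half_norm_sq_sub_of_flow (L : X →L[ℝ] Y) (φbar : X) {φ : ℝ → X}
    {t : ℝ} (hφ : HasDerivAt φ (-(L.adjoint (L (φ t) - L φbar))) t) :
    HasDerivAt (fun s => -(‖φ s - φbar‖ ^ 2 / 2)) (‖L (φ t) - L φbar‖ ^ 2) t := by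
  have h := ((hφ.sub_const φbar).norm_sq.div_const 2).neg
  rw [← map_sub, inner_neg_right, L.inner_adjoint_apply_self, map_sub] at h
  exact h.congr_deriv (by ring)

end Hilbert

/-- Exact-data asymptotic regularization flow: the residual is
square-integrable over `(0,∞)` with `∫₀^∞ ‖L φ(t) − L φ̄‖² dt ≤ (1/2)‖φ(0) − φ̄‖²`. -/
theorem exact_flow_residual_square_integrable
    {X Y : Type*}
    [NormedAddCommGroup X] [InnerProductSpace ℝ X] [CompleteSpace X]
    [NormedAddCommGroup Y] [InnerProductSpace ℝ Y] [CompleteSpace Y]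
    (L : X →L[ℝ] Y) (φbar : X) (φ : ℝ → X)
    (hflow : ∀ t : ℝ, 0 ≤ t →
      HasDerivAt φ (-(L.adjoint (L (φ t) - L φbar))) t) :
    MeasureTheory.IntegrableOn (fun t => ‖L (φ t) - L φbar‖ ^ 2) (Set.Ioi (0:ℝ)) ∧
    ∫ t in Set.Ioi (0:ℝ), ‖L (φ t) - L φbar‖ ^ 2 ≤ (1/2) * ‖φ 0 - φbar‖ ^ 2 := by
  have h := integrableOn_Ioi_and_integral_le_of_hasDerivAt_of_le (B := 0)
    (fun t ht => hasDerivAt_neg_half_norm_sq_sub_of_flow L φbar (hflow t ht))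
    (fun _ _ => by positivity) (fun _ _ => by simp only [Left.neg_nonpos_iff]; positivity)
  exact ⟨h.1, h.2.trans_eq (by ring)⟩
end

section
/- Let φ̄ ∈ X, δ > 0, τ > 1, and let yᵟ ∈ Y satisfy ‖yᵟ − L φ̄‖ ≤ δ. Suppose φ : [0,∞) → X is differentiable and satisfies the noisy-data flow φ'(t) = −L*(L φ(t) − yᵟ) for all t ≥ 0. Then at every time t ≥ 0 with ‖L φ(t) − yᵟ‖ > τ δ, the squared iteration error satisfies d/dt ‖φ(t) − φ̄‖² ≤ −2 (1 − 1/τ) ‖L φ(t) − yᵟ‖² < 0; in particular the iteration error is strictly monotone decreasing as long as the residual exceeds τ δ. -/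
/-! Along the flow, `d/dt ‖φ - φ̄‖² = -2 ⟪r, L (φ - φ̄)⟫` with residual `r = L φ - yᵟ`, and
`L (φ - φ̄) = r + (yᵟ - L φ̄)`. The noise term is at most `‖r‖ δ < ‖r‖² / τ` by Cauchy–Schwarz,
so the inner product is at least `(1 - 1/τ) ‖r‖²`. -/

open scoped InnerProductSpace

theorem one_sub_one_div_mul_norm_sq_le_inner_self_add {E : Type*} [NormedAddCommGroup E]
    [InnerProductSpace ℝ E] (r e : E) {τ : ℝ} (hτ : 0 < τ) (he : τ * ‖e‖ ≤ ‖r‖) :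
    (1 - 1 / τ) * ‖r‖ ^ 2 ≤ ⟪r, r + e⟫_ℝ := by
  have hnoise : ‖r‖ * ‖e‖ ≤ ‖r‖ ^ 2 / τ := by
    rw [le_div_iff₀ hτ]
    nlinarith [norm_nonneg r]
  have hcs : -(‖r‖ * ‖e‖) ≤ ⟪r, e⟫_ℝ := neg_le_of_abs_le (abs_real_inner_le_norm r e)
  calc (1 - 1 / τ) * ‖r‖ ^ 2 = ‖r‖ ^ 2 - ‖r‖ ^ 2 / τ := by ring
    _ ≤ ‖r‖ ^ 2 + ⟪r, e⟫_ℝ := by linarith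
    _ = ⟪r, r + e⟫_ℝ := by rw [inner_add_right, real_inner_self_eq_norm_sq]

theorem hasDerivAt_norm_sub_sq_of_residual_flow {X Y : Type*}
    [NormedAddCommGroup X] [InnerProductSpace ℝ X] [CompleteSpace X]
    [NormedAddCommGroup Y] [InnerProductSpace ℝ Y] [CompleteSpace Y]
    (L : X →L[ℝ] Y) (y : Y) (a : X) {φ : ℝ → X} {t : ℝ}
    (hφ : HasDerivAt φ (-(L.adjoint (L (φ t) - y))) t) :
    HasDerivAt (fun s => ‖φ s - a‖ ^ 2) (-2 * ⟪L (φ t) - y, L (φ t - a)⟫_ℝ) t := by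
  convert (hφ.sub_const a).norm_sq using 1
  rw [inner_neg_right, ContinuousLinearMap.adjoint_inner_right, real_inner_comm]
  ring

theorem noisy_flow_strict_monotonicity_general
    {X Y : Type*}
    [NormedAddCommGroup X] [InnerProductSpace ℝ X] [CompleteSpace X]
    [NormedAddCommGroup Y] [InnerProductSpace ℝ Y] [CompleteSpace Y]
    (L : X →L[ℝ] Y) (φbar : X) (δ τ : ℝ) (hτ : 1 < τ)
    (yδ : Y) (hnoise : ‖yδ - L φbar‖ ≤ δ) (φ : ℝ → X)
    (hflow : ∀ t : ℝ, 0 ≤ t →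
      HasDerivAt φ (-(L.adjoint (L (φ t) - yδ))) t) :
    ∀ t : ℝ, 0 ≤ t → τ * δ < ‖L (φ t) - yδ‖ →
      ∃ D : ℝ, HasDerivAt (fun s => ‖φ s - φbar‖ ^ 2) D t ∧
        D ≤ -2 * (1 - 1/τ) * ‖L (φ t) - yδ‖ ^ 2 ∧ D < 0 := by
  intro t ht hres
  set r := L (φ t) - yδ
  have hτ0 : 0 < τ := one_pos.trans hτ
  have hr : 0 < ‖r‖ :=
    (mul_nonneg hτ0.le ((norm_nonneg _).trans hnoise)).trans_lt hres
  have hsplit : L (φ t - φbar) = r + (yδ - L φbar) := by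
    rw [map_sub]; simp only [r]; abel
  have hcoercive : (1 - 1 / τ) * ‖r‖ ^ 2 ≤ ⟪r, L (φ t - φbar)⟫_ℝ :=
    hsplit ▸ one_sub_one_div_mul_norm_sq_le_inner_self_add r _ hτ0
      ((mul_le_mul_of_nonneg_left hnoise hτ0.le).trans hres.le)
  have hpos : 0 < (1 - 1 / τ) * ‖r‖ ^ 2 :=
    mul_pos (sub_pos.mpr ((div_lt_one hτ0).mpr hτ)) (pow_pos hr 2)
  refine ⟨_, hasDerivAt_norm_sub_sq_of_residual_flow L yδ φbar (hflow t ht), ?_, ?_⟩ <;>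
    linarith

/-- Noisy-data flow with `‖yᵟ − L φ̄‖ ≤ δ`, `τ > 1`: at every
time `t ≥ 0` where the residual exceeds `τ δ`, the squared error satisfies
`d/dt ‖φ(t) − φ̄‖² ≤ −2(1 − 1/τ)‖L φ(t) − yᵟ‖² < 0`. -/
theorem noisy_flow_strict_monotonicity
    {X Y : Type*}
    [NormedAddCommGroup X] [InnerProductSpace ℝ X] [CompleteSpace X]
    [NormedAddCommGroup Y] [InnerProductSpace ℝ Y] [CompleteSpace Y]
    (L : X →L[ℝ] Y) (φbar : X) (δ τ : ℝ) (hδ : 0 < δ) (hτ : 1 < τ)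
    (yδ : Y) (hnoise : ‖yδ - L φbar‖ ≤ δ) (φ : ℝ → X)
    (hflow : ∀ t : ℝ, 0 ≤ t →
      HasDerivAt φ (-(L.adjoint (L (φ t) - yδ))) t) :
    ∀ t : ℝ, 0 ≤ t → τ * δ < ‖L (φ t) - yδ‖ →
      ∃ D : ℝ, HasDerivAt (fun s => ‖φ s - φbar‖ ^ 2) D t ∧
        D ≤ -2 * (1 - 1/τ) * ‖L (φ t) - yδ‖ ^ 2 ∧ D < 0 :=
  noisy_flow_strict_monotonicity_general L φbar δ τ hτ yδ hnoise φ hflow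
end

section
/- Let φ̄ ∈ X, δ > 0, τ > 1, and let yᵟ ∈ Y satisfy ‖yᵟ − L φ̄‖ ≤ δ. Suppose φ : [0,∞) → X is differentiable, satisfies the noisy-data flow φ'(t) = −L*(L φ(t) − yᵟ) for all t ≥ 0, and suppose T ≥ 0 is such that ‖L φ(t) − yᵟ‖ > τ δ for all t ∈ [0,T]. Then T ≤ ‖φ(0) − φ̄‖² / (2 (1 − 1/τ) τ² δ²). In particular, the stopping time T_δ := inf{ t ≥ 0 : ‖L φ(t) − yᵟ‖ ≤ τ δ } defined by the generalized discrepancy principle is finite. -/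
open scoped RealInnerProductSpace

/-- Noisy-data flow, `‖yᵟ − L φ̄‖ ≤ δ`, `τ > 1`: if the residual
exceeds `τ δ` on all of `[0,T]`, then `T ≤ ‖φ(0) − φ̄‖² / (2(1 − 1/τ)τ²δ²)`.
In particular the discrepancy-principle stopping time is finite, i.e. there is
some `t ≥ 0` with `‖L φ(t) − yᵟ‖ ≤ τ δ`. -/
theorem noisy_flow_stopping_time_finite
    {X Y : Type*}
    [NormedAddCommGroup X] [InnerProductSpace ℝ X] [CompleteSpace X]
    [NormedAddCommGroup Y] [InnerProductSpace ℝ Y] [CompleteSpace Y]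
    (L : X →L[ℝ] Y) (φbar : X) (δ τ : ℝ) (hδ : 0 < δ) (hτ : 1 < τ)
    (yδ : Y) (hnoise : ‖yδ - L φbar‖ ≤ δ) (φ : ℝ → X)
    (hflow : ∀ t : ℝ, 0 ≤ t →
      HasDerivAt φ (-(L.adjoint (L (φ t) - yδ))) t) :
    (∀ T : ℝ, 0 ≤ T → (∀ t ∈ Set.Icc (0:ℝ) T, τ * δ < ‖L (φ t) - yδ‖) →
      T ≤ ‖φ 0 - φbar‖ ^ 2 / (2 * (1 - 1/τ) * τ ^ 2 * δ ^ 2)) ∧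
    ∃ t : ℝ, 0 ≤ t ∧ ‖L (φ t) - yδ‖ ≤ τ * δ := by
  have hτ0 : 0 < τ := lt_trans one_pos hτ
  set c : ℝ := 2 * (1 - 1/τ) * τ ^ 2 * δ ^ 2 with hc
  have hc0 : 0 < c := by
    have h1 : 0 < 1 - 1/τ := by
      have : 1/τ < 1 := by
        rw [div_lt_one hτ0]; exact hτ
      linarith
    positivity
  -- the main estimate
  have main : ∀ T : ℝ, 0 ≤ T → (∀ t ∈ Set.Icc (0:ℝ) T, τ * δ < ‖L (φ t) - yδ‖) →
      T ≤ ‖φ 0 - φbar‖ ^ 2 / c := by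
    intro T hT hres
    -- g t := ‖φ t - φbar‖² + c t is antitone on [0,T]
    set g : ℝ → ℝ := fun t => ⟪φ t - φbar, φ t - φbar⟫ + c * t with hg
    have hderiv : ∀ t : ℝ, 0 ≤ t → HasDerivAt g
        (⟪φ t - φbar, -(L.adjoint (L (φ t) - yδ))⟫ +
         ⟪-(L.adjoint (L (φ t) - yδ)), φ t - φbar⟫ + c) t := by
      intro t ht
      have hd : HasDerivAt (fun s => φ s - φbar) (-(L.adjoint (L (φ t) - yδ))) t :=
        (hflow t ht).sub_const φbar
      exact (hd.inner ℝ hd).add (by simpa using (hasDerivAt_id t).const_mul c)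
    have hanti : AntitoneOn g (Set.Icc 0 T) := by
      apply antitoneOn_of_deriv_nonpos (convex_Icc 0 T)
      · intro t ht
        exact (hderiv t ht.1).continuousAt.continuousWithinAt
      · intro t ht
        rw [interior_Icc] at ht
        exact ((hderiv t ht.1.le).differentiableAt).differentiableWithinAt
      · intro t ht
        rw [interior_Icc] at ht
        have ht0 : (0:ℝ) ≤ t := ht.1.le
        rw [(hderiv t ht0).deriv]
        set r := L (φ t) - yδ with hr
        have hrτ : τ * δ < ‖r‖ := hres t ⟨ht0, ht.2.le⟩
        have hkey : ⟪r, L (φ t) - L φbar⟫ = ‖r‖^2 + ⟪r, yδ - L φbar⟫ := by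
          have : L (φ t) - L φbar = r + (yδ - L φbar) := by rw [hr]; abel
          rw [this, inner_add_right, real_inner_self_eq_norm_sq]
        have hlow : ‖r‖ * (‖r‖ - δ) ≤ ⟪r, L (φ t) - L φbar⟫ := by
          rw [hkey]
          have := abs_real_inner_le_norm r (yδ - L φbar)
          have h2 : -(‖r‖ * δ) ≤ ⟪r, yδ - L φbar⟫ := by
            have := neg_abs_le ⟪r, yδ - L φbar⟫
            nlinarith [norm_nonneg r]
          nlinarith
        have hmid : c ≤ 2 * ⟪r, L (φ t) - L φbar⟫ := by
          have hcd : c = 2 * ((τ * δ) * (τ * δ - δ)) := by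
            rw [hc]; field_simp
          have h1 : (τ * δ) * (τ * δ - δ) ≤ ‖r‖ * (‖r‖ - δ) := by
            nlinarith [mul_nonneg (sub_nonneg.2 hrτ.le)
              (by nlinarith : (0:ℝ) ≤ ‖r‖ + τ * δ - δ)]
          rw [hcd]; linarith
        have hin : ⟪φ t - φbar, -(L.adjoint r)⟫ = -⟪r, L (φ t) - L φbar⟫ := by
          rw [inner_neg_right, real_inner_comm, L.adjoint_inner_left, map_sub]
        have hin2 : ⟪-(L.adjoint r), φ t - φbar⟫ = -⟪r, L (φ t) - L φbar⟫ := by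
          rw [inner_neg_left, L.adjoint_inner_left, map_sub]
        rw [hin, hin2]
        linarith
    have hb := hanti (Set.left_mem_Icc.2 hT) (Set.right_mem_Icc.2 hT) hT
    simp only [hg] at hb
    have hinner0 : (0:ℝ) ≤ ⟪φ T - φbar, φ T - φbar⟫ := real_inner_self_nonneg
    have h0 : ⟪φ 0 - φbar, φ 0 - φbar⟫ = ‖φ 0 - φbar‖^2 := real_inner_self_eq_norm_sq _
    rw [le_div_iff₀ hc0]
    nlinarith
  refine ⟨main, ?_⟩
  by_contra h
  push_neg at h
  set T := ‖φ 0 - φbar‖ ^ 2 / c + 1 with hT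
  have hTnn : 0 ≤ T := by rw [hT]; positivity
  have h2 := main T hTnn (fun t ht => h t ht.1)
  rw [hT] at h2
  linarith
end

section
/- Let φ̄ ∈ X, δ > 0, τ > 1, and let yᵟ ∈ Y satisfy ‖yᵟ − L φ̄‖ ≤ δ. Suppose φ : [0,∞) → X is differentiable, satisfies the noisy-data flow φ'(t) = −L*(L φ(t) − yᵟ) for all t ≥ 0, and suppose T ≥ 0 is such that ‖L φ(t) − yᵟ‖ > τ δ for all t ∈ [0,T). Then the accumulated residual obeys 2 (1 − 1/τ) ∫₀ᵀ ‖L φ(t) − yᵟ‖² dt ≤ ‖φ(0) − φ̄‖², and moreover ‖φ(t) − φ̄‖ ≤ ‖φ(0) − φ̄‖ for every t ∈ [0,T]. -/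
open MeasureTheory Set

open scoped RealInnerProductSpace

/-!
Along the flow, `E(t) = ‖φ(t) - φ̄‖²` has derivative `-2⟪r, r + e⟫`, where `r = Lφ(t) - yᵟ`
is the residual and `e = yᵟ - Lφ̄` the noise. While the discrepancy principle `‖r‖ > τδ` holds,
Cauchy–Schwarz gives `⟪r, e⟫ ≥ -‖r‖δ ≥ -‖r‖²/τ`, so `E' ≤ -2(1 - 1/τ)‖r‖² ≤ 0`. Integrating over
`[0, T]` bounds the accumulated residual by `E(0) - E(T) ≤ E(0)`, and integrating over `[0, t]`
shows that `E` is nonincreasing.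
-/

theorem one_sub_inv_mul_norm_sq_le_inner_add {Y : Type*} [NormedAddCommGroup Y]
    [InnerProductSpace ℝ Y] {r e : Y} {δ τ : ℝ} (hτ : 0 < τ) (he : ‖e‖ ≤ δ)
    (hr : τ * δ ≤ ‖r‖) : (1 - 1 / τ) * ‖r‖ ^ 2 ≤ ⟪r, r + e⟫ := by
  have hδ : ‖r‖ * δ ≤ ‖r‖ ^ 2 / τ := by
    rw [le_div_iff₀ hτ]
    nlinarith [norm_nonneg r]
  have hcs : -(‖r‖ * ‖e‖) ≤ ⟪r, e⟫ := (abs_le.mp (abs_real_inner_le_norm r e)).1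
  have hre : ‖r‖ * ‖e‖ ≤ ‖r‖ * δ := mul_le_mul_of_nonneg_left he (norm_nonneg r)
  rw [inner_add_right, real_inner_self_eq_norm_sq]
  calc (1 - 1 / τ) * ‖r‖ ^ 2 = ‖r‖ ^ 2 - ‖r‖ ^ 2 / τ := by ring
    _ ≤ ‖r‖ ^ 2 + ⟪r, e⟫ := by linarith

section Flow

variable {X Y : Type*} [NormedAddCommGroup X] [InnerProductSpace ℝ X] [CompleteSpace X]
  [NormedAddCommGroup Y] [InnerProductSpace ℝ Y] [CompleteSpace Y]
  {L : X →L[ℝ] Y} {y : Y} {φ : ℝ → X} {t : ℝ}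

theorem hasDerivAt_norm_sub_sq_of_flow (hφ : HasDerivAt φ (-(L.adjoint (L (φ t) - y))) t)
    (x : X) :
    HasDerivAt (fun s ↦ ‖φ s - x‖ ^ 2) (-2 * ⟪L (φ t - x), L (φ t) - y⟫) t := by
  convert (hφ.sub_const x).norm_sq using 1
  rw [inner_neg_right, ContinuousLinearMap.adjoint_inner_right]
  ring

theorem norm_sub_sq_sub_le_integral_of_flow
    (hflow : ∀ t, 0 ≤ t → HasDerivAt φ (-(L.adjoint (L (φ t) - y))) t) (x : X) {a b : ℝ}
    (ha : 0 ≤ a) (hab : a ≤ b) {ψ : ℝ → ℝ} (hψ : ContinuousOn ψ (Icc a b))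
    (hle : ∀ t ∈ Ioo a b, -2 * ⟪L (φ t - x), L (φ t) - y⟫ ≤ ψ t) :
    ‖φ b - x‖ ^ 2 - ‖φ a - x‖ ^ 2 ≤ ∫ t in a..b, ψ t := by
  have hderiv : ∀ t ∈ Icc a b, HasDerivAt (fun s ↦ ‖φ s - x‖ ^ 2)
      (-2 * ⟪L (φ t - x), L (φ t) - y⟫) t :=
    fun t ht ↦ hasDerivAt_norm_sub_sq_of_flow (hflow t (ha.trans ht.1)) x
  refine intervalIntegral.sub_le_integral_of_hasDeriv_right_of_le hab
    (fun t ht ↦ (hderiv t ht).continuousAt.continuousWithinAt)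
    (fun t ht ↦ (hderiv t (Ioo_subset_Icc_self ht)).hasDerivWithinAt)
    hψ.integrableOn_Icc hle

end Flow

theorem noisy_flow_accumulated_residual_bound_general
    {X Y : Type*}
    [NormedAddCommGroup X] [InnerProductSpace ℝ X] [CompleteSpace X]
    [NormedAddCommGroup Y] [InnerProductSpace ℝ Y] [CompleteSpace Y]
    (L : X →L[ℝ] Y) (φbar : X) (δ τ : ℝ) (hτ : 1 < τ)
    (yδ : Y) (hnoise : ‖yδ - L φbar‖ ≤ δ) (φ : ℝ → X)
    (hflow : ∀ t : ℝ, 0 ≤ t →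
      HasDerivAt φ (-(L.adjoint (L (φ t) - yδ))) t)
    (T : ℝ) (hT : 0 ≤ T)
    (hres : ∀ t ∈ Set.Ico (0:ℝ) T, τ * δ < ‖L (φ t) - yδ‖) :
    2 * (1 - 1/τ) * (∫ t in (0:ℝ)..T, ‖L (φ t) - yδ‖ ^ 2) ≤ ‖φ 0 - φbar‖ ^ 2 ∧
    ∀ t ∈ Set.Icc (0:ℝ) T, ‖φ t - φbar‖ ≤ ‖φ 0 - φbar‖ := by
  have hc : 0 ≤ 1 - 1 / τ := sub_nonneg.mpr ((div_le_one (by linarith)).mpr hτ.le)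
  have hdecay : ∀ t ∈ Ico 0 T, -2 * ⟪L (φ t - φbar), L (φ t) - yδ⟫
      ≤ -(2 * (1 - 1 / τ) * ‖L (φ t) - yδ‖ ^ 2) := fun t ht ↦ by
    have hsplit : L (φ t - φbar) = (L (φ t) - yδ) + (yδ - L φbar) := by
      rw [map_sub]; abel
    rw [hsplit, real_inner_comm]
    linarith [one_sub_inv_mul_norm_sq_le_inner_add (by linarith) hnoise (hres t ht).le]
  have hφ : ContinuousOn φ (Icc 0 T) :=
    fun t ht ↦ (hflow t ht.1).continuousAt.continuousWithinAt
  constructor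
  · have henergy := norm_sub_sq_sub_le_integral_of_flow hflow φbar le_rfl hT
      (ψ := fun t ↦ -(2 * (1 - 1 / τ) * ‖L (φ t) - yδ‖ ^ 2))
      (by fun_prop)
      (fun t ht ↦ hdecay t (Ioo_subset_Ico_self ht))
    rw [intervalIntegral.integral_neg, intervalIntegral.integral_const_mul] at henergy
    linarith [sq_nonneg ‖φ T - φbar‖]
  · intro t ht
    have henergy := norm_sub_sq_sub_le_integral_of_flow hflow φbar le_rfl ht.1
      (ψ := fun _ ↦ 0) continuousOn_const fun s hs ↦
        (hdecay s ⟨hs.1.le, hs.2.trans_le ht.2⟩).trans (neg_nonpos.mpr (by positivity))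
    rw [intervalIntegral.integral_zero] at henergy
    exact pow_le_pow_iff_left₀ (norm_nonneg _) (norm_nonneg _) two_ne_zero |>.mp (by linarith)

/-- Noisy-data flow, `‖yᵟ − L φ̄‖ ≤ δ`, `τ > 1`: if the residual
exceeds `τ δ` on `[0,T)`, then `2(1 − 1/τ)∫₀ᵀ ‖L φ(t) − yᵟ‖² dt ≤ ‖φ(0) − φ̄‖²`,
and `‖φ(t) − φ̄‖ ≤ ‖φ(0) − φ̄‖` for every `t ∈ [0,T]`. -/
theorem noisy_flow_accumulated_residual_bound
    {X Y : Type*}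
    [NormedAddCommGroup X] [InnerProductSpace ℝ X] [CompleteSpace X]
    [NormedAddCommGroup Y] [InnerProductSpace ℝ Y] [CompleteSpace Y]
    (L : X →L[ℝ] Y) (φbar : X) (δ τ : ℝ) (hδ : 0 < δ) (hτ : 1 < τ)
    (yδ : Y) (hnoise : ‖yδ - L φbar‖ ≤ δ) (φ : ℝ → X)
    (hflow : ∀ t : ℝ, 0 ≤ t →
      HasDerivAt φ (-(L.adjoint (L (φ t) - yδ))) t)
    (T : ℝ) (hT : 0 ≤ T)
    (hres : ∀ t ∈ Set.Ico (0:ℝ) T, τ * δ < ‖L (φ t) - yδ‖) :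
    2 * (1 - 1/τ) * (∫ t in (0:ℝ)..T, ‖L (φ t) - yδ‖ ^ 2) ≤ ‖φ 0 - φbar‖ ^ 2 ∧
    ∀ t ∈ Set.Icc (0:ℝ) T, ‖φ t - φbar‖ ≤ ‖φ 0 - φbar‖ :=
  noisy_flow_accumulated_residual_bound_general L φbar δ τ hτ yδ hnoise φ hflow T hT hres
end

section
/- Assume in addition that L is injective. Let φ̄ ∈ X and suppose φ : [0,∞) → X is differentiable and satisfies the exact-data asymptotic-regularization flow φ'(t) = −L*(L φ(t) − L φ̄) for all t ≥ 0. Then φ(t) converges strongly to φ̄ in X as t → ∞. -/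
/-!
With `ψ = φ - φ̄` the flow reads `ψ' = -A ψ` for the positive operator `A = L* L`.
Symmetry of `A` makes `s ↦ ⟪ψ s, ψ (a + b - s)⟫` constant, so
`⟪ψ a, ψ b⟫ = ‖ψ ((a + b) / 2)‖²`. Positivity makes `‖ψ t‖²` non-increasing, hence convergent
to some `c`, and then `‖ψ a - ψ b‖² = ‖ψ a‖² + ‖ψ b‖² - 2 ‖ψ ((a + b) / 2)‖² → 0`: `ψ` is
Cauchy, with a limit `w`. Passing to the limit, `⟪w, ψ t⟫ = c` for all `t ≥ 0`; differentiating
gives `⟪A w, ψ t⟫ = 0`, hence `‖L w‖² = ⟪A w, w⟫ = 0`, and `w = 0` by injectivity of `L`.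
-/

open Filter Topology Set
open scoped RealInnerProductSpace

theorem AntitoneOn.exists_tendsto_atTop {f : ℝ → ℝ} {a : ℝ} (hf : AntitoneOn f (Ici a))
    (hbdd : BddBelow (f '' Ici a)) : ∃ c, Tendsto f atTop (𝓝 c) := by
  have hanti : Antitone (fun x : Ici a => f x) := fun x y hxy => hf x.2 y.2 hxy
  have hbdd' : BddBelow (range fun x : Ici a => f x) := by rwa [← image_eq_range]
  exact ⟨_, tendsto_comp_val_Ici_atTop.1 (tendsto_atTop_ciInf hanti hbdd')⟩

section Flow

variable {X : Type*} [NormedAddCommGroup X] [InnerProductSpace ℝ X] {A : X →L[ℝ] X} {ψ : ℝ → X}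

theorem inner_flow_eq_norm_sq_midpoint (hA : A.IsSymmetric)
    (hψ : ∀ t, 0 ≤ t → HasDerivAt ψ (-A (ψ t)) t) {a b : ℝ} (ha : 0 ≤ a) (hb : 0 ≤ b) :
    ⟪ψ a, ψ b⟫ = ‖ψ ((a + b) / 2)‖ ^ 2 := by
  set u : ℝ → ℝ := fun s => ⟪ψ s, ψ (a + b - s)⟫
  have hu : ∀ s ∈ Icc 0 (a + b), HasDerivAt u 0 s := by
    rintro s ⟨hs₀, hs₁⟩
    have hrev : HasDerivAt (fun s => ψ (a + b - s)) (A (ψ (a + b - s))) s := by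
      simpa using (hψ _ (sub_nonneg.2 hs₁)).comp_const_sub (a + b) s
    refine ((hψ s hs₀).inner ℝ hrev).congr_deriv ?_
    rw [inner_neg_left, ← ContinuousLinearMap.coe_coe A, hA, add_neg_cancel]
  have hconst := constant_of_has_deriv_right_zero
    (fun s hs => (hu s hs).continuousAt.continuousWithinAt)
    (fun s hs => (hu s (Ico_subset_Icc_self hs)).hasDerivWithinAt)
  have hua := hconst a ⟨ha, by linarith⟩
  have hum := hconst ((a + b) / 2) ⟨by linarith, by linarith⟩
  have hmid : a + b - (a + b) / 2 = (a + b) / 2 := by ring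
  simp only [u, add_sub_cancel_left, hmid, real_inner_self_eq_norm_sq] at hua hum
  rw [hua, hum]

theorem antitoneOn_norm_sq_flow (hA : A.IsPositive)
    (hψ : ∀ t, 0 ≤ t → HasDerivAt ψ (-A (ψ t)) t) :
    AntitoneOn (fun t => ‖ψ t‖ ^ 2) (Ici 0) := by
  have hd : ∀ t ∈ Ici (0 : ℝ), HasDerivAt (fun t => ‖ψ t‖ ^ 2) (2 * ⟪ψ t, -A (ψ t)⟫) t :=
    fun t ht => (hψ t ht).norm_sq
  refine antitoneOn_of_deriv_nonpos (convex_Ici 0)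
    (fun t ht => (hd t ht).continuousAt.continuousWithinAt)
    (fun t ht => (hd t (interior_subset ht)).differentiableAt.differentiableWithinAt)
    (fun t ht => ?_)
  rw [(hd t (interior_subset ht)).deriv, inner_neg_right]
  nlinarith [hA.inner_nonneg_right (ψ t)]

theorem exists_tendsto_norm_sq_flow (hA : A.IsPositive)
    (hψ : ∀ t, 0 ≤ t → HasDerivAt ψ (-A (ψ t)) t) :
    ∃ c, Tendsto (fun t => ‖ψ t‖ ^ 2) atTop (𝓝 c) :=
  (antitoneOn_norm_sq_flow hA hψ).exists_tendsto_atTop ⟨0, by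
    rintro _ ⟨t, -, rfl⟩
    positivity⟩

theorem cauchySeq_flow (hA : A.IsPositive)
    (hψ : ∀ t, 0 ≤ t → HasDerivAt ψ (-A (ψ t)) t) : CauchySeq ψ := by
  rw [cauchySeq_iff_tendsto_dist_atTop_0, ← prod_atTop_atTop_eq]
  obtain ⟨c, hc⟩ := exists_tendsto_norm_sq_flow hA hψ
  have hfst : Tendsto (fun p : ℝ × ℝ => ‖ψ p.1‖ ^ 2) (atTop ×ˢ atTop) (𝓝 c) :=
    hc.comp tendsto_fst
  have hsnd : Tendsto (fun p : ℝ × ℝ => ‖ψ p.2‖ ^ 2) (atTop ×ˢ atTop) (𝓝 c) :=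
    hc.comp tendsto_snd
  have hmid : Tendsto (fun p : ℝ × ℝ => ‖ψ ((p.1 + p.2) / 2)‖ ^ 2) (atTop ×ˢ atTop) (𝓝 c) := by
    refine hc.comp (Tendsto.atTop_div_const two_pos ?_)
    exact tendsto_fst.atTop_add_atTop tendsto_snd
  have hsq : Tendsto (fun p : ℝ × ℝ => dist (ψ p.1) (ψ p.2) ^ 2) (atTop ×ˢ atTop) (𝓝 0) := by
    have hlim := (hfst.add hsnd).sub (hmid.const_mul 2)
    rw [show c + c - 2 * c = 0 by ring] at hlim
    refine hlim.congr' ?_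
    filter_upwards [prod_mem_prod (Ici_mem_atTop 0) (Ici_mem_atTop 0)] with p ⟨hp₁, hp₂⟩
    rw [dist_eq_norm, norm_sub_sq_real,
      inner_flow_eq_norm_sq_midpoint hA.isSymmetric hψ hp₁ hp₂]
    ring
  simpa only [Real.sqrt_sq dist_nonneg, Real.sqrt_zero] using hsq.sqrt

theorem inner_apply_self_eq_zero_of_tendsto_flow (hA : A.IsPositive)
    (hψ : ∀ t, 0 ≤ t → HasDerivAt ψ (-A (ψ t)) t) {w : X} (hw : Tendsto ψ atTop (𝓝 w)) :
    ⟪A w, w⟫ = 0 := by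
  obtain ⟨c, hc⟩ := exists_tendsto_norm_sq_flow hA hψ
  have hinner : ∀ b, 0 ≤ b → ⟪w, ψ b⟫ = c := by
    intro b hb
    have hmid : Tendsto (fun a => (a + b) / 2) atTop atTop :=
      (tendsto_atTop_add_const_right _ b tendsto_id).atTop_div_const two_pos
    refine tendsto_nhds_unique (hw.inner tendsto_const_nhds) ((hc.comp hmid).congr' ?_)
    filter_upwards [eventually_ge_atTop 0] with a ha
    exact (inner_flow_eq_norm_sq_midpoint hA.isSymmetric hψ ha hb).symm
  have horth : ∀ b, 0 < b → ⟪A w, ψ b⟫ = 0 := by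
    intro b hb
    have hconst : (fun t => ⟪w, ψ t⟫) =ᶠ[𝓝 b] fun _ => c := by
      filter_upwards [eventually_gt_nhds hb] with t ht using hinner t ht.le
    have hd := ((hasDerivAt_const b w).inner ℝ (hψ b hb.le)).unique
      ((hasDerivAt_const b c).congr_of_eventuallyEq hconst)
    rwa [inner_neg_right, ← hA.inner_left_eq_inner_right, inner_zero_left, add_zero,
      neg_eq_zero] at hd
  refine tendsto_nhds_unique (tendsto_const_nhds.inner hw) (tendsto_const_nhds.congr' ?_)
  filter_upwards [eventually_gt_atTop 0] with b hb using (horth b hb).symm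

end Flow

/-- If `L` is injective, any solution of the exact-data
asymptotic-regularization flow `φ' = −L*(L φ − L φ̄)` converges strongly to `φ̄`
as `t → ∞`. -/
theorem exact_flow_convergence
    {X Y : Type*}
    [NormedAddCommGroup X] [InnerProductSpace ℝ X] [CompleteSpace X]
    [NormedAddCommGroup Y] [InnerProductSpace ℝ Y] [CompleteSpace Y]
    (L : X →L[ℝ] Y) (hL : Function.Injective L) (φbar : X) (φ : ℝ → X)
    (hflow : ∀ t : ℝ, 0 ≤ t →
      HasDerivAt φ (-(L.adjoint (L (φ t) - L φbar))) t) :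
    Filter.Tendsto φ Filter.atTop (nhds φbar) := by
  set ψ : ℝ → X := fun t => φ t - φbar
  have hψ : ∀ t, 0 ≤ t → HasDerivAt ψ (-(L.adjoint ∘L L) (ψ t)) t := fun t ht => by
    simpa only [ψ, ContinuousLinearMap.comp_apply, map_sub] using (hflow t ht).sub_const φbar
  have hpos := L.isPositive_adjoint_comp_self
  obtain ⟨w, hw⟩ := cauchySeq_tendsto_of_complete (cauchySeq_flow hpos hψ)
  have hLw : L w = 0 := by
    have h := inner_apply_self_eq_zero_of_tendsto_flow hpos hψ hw
    rwa [ContinuousLinearMap.comp_apply, ContinuousLinearMap.adjoint_inner_left,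
      inner_self_eq_zero] at h
  obtain rfl : w = 0 := (map_eq_zero_iff L hL).1 hLw
  simpa [ψ] using hw.add_const φbar
end

section
/- Assume in addition that L is injective and fix τ > 1, an initial guess φ₀ ∈ X, and an exact solution φ̄ ∈ X. Let δₖ > 0 be a sequence with δₖ → 0, let yₖ ∈ Y satisfy ‖yₖ − L φ̄‖ ≤ δₖ for every k, and let φₖ : [0,∞) → X be differentiable curves with φₖ(0) = φ₀ satisfying the noisy-data flows φₖ'(t) = −L*(L φₖ(t) − yₖ) for all t ≥ 0. If Tₖ := inf{ t ≥ 0 : ‖L φₖ(t) − yₖ‖ ≤ τ δₖ } denote the (finite) discrepancy-principle stopping times, then the approximations φₖ(Tₖ) converge strongly to φ̄ in X as k → ∞. -/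
/-!
Write `A = L*L` and `W t = exp (-t A) (φ₀ - φ̄)`, so that `φ̄ + W` is the flow for the exact
data `L φ̄`. The difference of two flows is a flow for the difference of the data, and a flow
for data `r` started at `0` stays within `‖r‖ √(t/2)`; hence `‖φₖ t - φ̄ - W t‖ ≤ δₖ √(t/2)`.
Along a flow, `‖φ t - φ̄‖²` decreases as long as the residual exceeds `δ`, which makes the
stopping time finite (as `τ > 1`) and `‖φ t - φ̄‖` antitone up to it. Since `L` is injective, the
range of `A` is dense, and the smoothing bound `‖A exp (-t A) z‖ ≤ ‖z‖ / t` gives `W t → 0`.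

Given `ε`, fix `T₀` with `‖W T₀‖` small and compare `φₖ(Tₖ)` with `φₖ(min Tₖ T₀)`. If `Tₖ ≥ T₀`
this is `W T₀` up to `O(δₖ)`. If `Tₖ < T₀`, the discrepancy principle gives `‖L (W Tₖ)‖ = O(δₖ)`,
and on the compact interval `[0, T₀]` injectivity of `L` turns this into `‖W Tₖ‖` small.
-/

open Set Filter Topology NormedSpace
open scoped RealInnerProductSpace

theorem Convex.antitoneOn_of_hasDerivAt_nonpos {D : Set ℝ} (hD : Convex ℝ D) {f f' : ℝ → ℝ}
    (hf : ∀ t ∈ D, HasDerivAt f (f' t) t) (hf' : ∀ t ∈ interior D, f' t ≤ 0) :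
    AntitoneOn f D :=
  antitoneOn_of_hasDerivWithinAt_nonpos hD
    (fun t ht => (hf t ht).continuousAt.continuousWithinAt)
    (fun t ht => (hf t (interior_subset ht)).hasDerivWithinAt) hf'

theorem norm_mul_sub_norm_le_inner_add {E : Type*} [NormedAddCommGroup E]
    [InnerProductSpace ℝ E] (a b : E) : ‖a‖ * (‖a‖ - ‖b‖) ≤ ⟪a, a + b⟫ := by
  have := (abs_le.1 (abs_real_inner_le_norm a b)).1
  rw [inner_add_right, real_inner_self_eq_norm_sq]
  linarith

section Semigroup

variable {X : Type*} [NormedAddCommGroup X] [InnerProductSpace ℝ X] [CompleteSpace X]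
  (A : X →L[ℝ] X)

theorem hasDerivAt_exp_neg_smul_apply (v : X) (t : ℝ) :
    HasDerivAt (fun s : ℝ => exp (s • -A) v) (-A (exp (t • -A) v)) t := by
  simpa using (hasDerivAt_exp_smul_const' (𝕂 := ℝ) (-A) t).clm_apply (hasDerivAt_const t v)

theorem continuous_exp_neg_smul_apply (v : X) : Continuous fun t : ℝ => exp (t • -A) v :=
  continuous_iff_continuousAt.2 fun t => (hasDerivAt_exp_neg_smul_apply A v t).continuousAt

omit [CompleteSpace X] in
theorem exp_neg_smul_apply_comm (t : ℝ) (v : X) : exp (t • -A) (A v) = A (exp (t • -A) v) :=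
  DFunLike.congr_fun ((Commute.refl A).neg_left.smul_left t).exp_left.eq v

variable {A}

theorem ContinuousLinearMap.IsPositive.norm_exp_neg_smul_apply_le (hA : A.IsPositive) (v : X)
    {t : ℝ} (ht : 0 ≤ t) : ‖exp (t • -A) v‖ ≤ ‖v‖ := by
  have hmono : AntitoneOn (fun s => ‖exp (s • -A) v‖ ^ 2) (Ici (0:ℝ)) :=
    (convex_Ici 0).antitoneOn_of_hasDerivAt_nonpos
      (fun s _ => (hasDerivAt_exp_neg_smul_apply A v s).norm_sq) fun s _ => by
        rw [inner_neg_right, real_inner_comm]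
        nlinarith [hA.inner_nonneg_left (exp (s • -A) v)]
  have := hmono self_mem_Ici ht ht
  simp only [zero_smul, exp_zero, one_apply_eq_self] at this
  exact (sq_le_sq₀ (norm_nonneg _) (norm_nonneg _)).1 this

theorem ContinuousLinearMap.IsPositive.norm_apply_exp_neg_smul_apply_le (hA : A.IsPositive)
    (v : X) {t : ℝ} (ht : 0 < t) : ‖A (exp (t • -A) v)‖ ≤ ‖v‖ / t := by
  set u : ℝ → X := fun s => exp (s • -A) v
  have hu (s : ℝ) : HasDerivAt u (-A (u s)) s := hasDerivAt_exp_neg_smul_apply A v s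
  have hAu (s : ℝ) : HasDerivAt (fun r => A (u r)) (-A (A (u s))) s := by
    simpa [Function.comp_def] using A.hasFDerivAt.comp_hasDerivAt s (hu s)
  -- The weights `2 s` and `2 s²` make the derivative collapse to `-4 s² ⟪A u, A (A u)⟫`.
  have hmono : AntitoneOn
      (fun s => ‖u s‖ ^ 2 + 2 * s * ⟪A (u s), u s⟫ + 2 * s ^ 2 * ‖A (u s)‖ ^ 2) (Ici (0:ℝ)) := by
    refine (convex_Ici 0).antitoneOn_of_hasDerivAt_nonpos
      (f' := fun s => -4 * s ^ 2 * ⟪A (u s), A (A (u s))⟫) (fun s _ => ?_) fun s _ => by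
        nlinarith [hA.inner_nonneg_left (A (u s)), real_inner_comm (A (u s)) (A (A (u s)))]
    have hsym : ⟪A (A (u s)), u s⟫ = ‖A (u s)‖ ^ 2 := by
      rw [hA.inner_left_eq_inner_right, real_inner_self_eq_norm_sq]
    have := (((hu s).norm_sq.add (((hasDerivAt_id s).const_mul 2).mul
      ((hAu s).inner ℝ (hu s)))).add (((hasDerivAt_pow 2 s).const_mul 2).mul (hAu s).norm_sq))
    refine this.congr_deriv ?_
    simp only [inner_neg_left, inner_neg_right, hsym, real_inner_self_eq_norm_sq, id,
      real_inner_comm (u s) (A (u s))]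
    push_cast
    ring
  have := hmono self_mem_Ici ht.le ht.le
  simp only [u, zero_smul, exp_zero, one_apply_eq_self] at this
  rw [le_div_iff₀ ht, ← sq_le_sq₀ (by positivity) (norm_nonneg v)]
  nlinarith [sq_nonneg ‖exp (t • -A) v‖, hA.inner_nonneg_left (exp (t • -A) v)]

theorem ContinuousLinearMap.IsPositive.denseRange_of_injective (hA : A.IsPositive)
    (hinj : Function.Injective A) : DenseRange A := by
  have : A.range.topologicalClosure = ⊤ := by
    rw [Submodule.topologicalClosure_eq_top_iff, ContinuousLinearMap.orthogonal_range,
      hA.isSelfAdjoint.adjoint_eq]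
    exact LinearMap.ker_eq_bot.2 hinj
  exact Submodule.dense_iff_topologicalClosure_eq_top.2 this

theorem ContinuousLinearMap.IsPositive.tendsto_exp_neg_smul_apply (hA : A.IsPositive)
    (hinj : Function.Injective A) (v : X) :
    Tendsto (fun t : ℝ => exp (t • -A) v) atTop (𝓝 0) := by
  rw [Metric.tendsto_nhds]
  intro ε hε
  obtain ⟨z, hz⟩ := (hA.denseRange_of_injective hinj).exists_dist_lt v (half_pos hε)
  have hsmooth : Tendsto (fun t : ℝ => A (exp (t • -A) z)) atTop (𝓝 0) :=
    squeeze_zero_norm' ((eventually_gt_atTop 0).mono fun t ht =>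
      hA.norm_apply_exp_neg_smul_apply_le z ht) (tendsto_const_nhds.div_atTop tendsto_id)
  filter_upwards [eventually_ge_atTop 0,
    hsmooth.eventually (Metric.ball_mem_nhds 0 (half_pos hε))] with t ht hsmall
  rw [dist_zero_right, ← sub_add_cancel v (A z), map_add, exp_neg_smul_apply_comm]
  rw [dist_eq_norm] at hz
  rw [dist_zero_right] at hsmall
  have hcontract := hA.norm_exp_neg_smul_apply_le (v - A z) ht
  calc ‖exp (t • -A) (v - A z) + A (exp (t • -A) z)‖
      ≤ ‖exp (t • -A) (v - A z)‖ + ‖A (exp (t • -A) z)‖ := norm_add_le _ _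
    _ < ε := by linarith

end Semigroup

section GradientFlow

variable {X Y : Type*} [NormedAddCommGroup X] [InnerProductSpace ℝ X] [CompleteSpace X]
  [NormedAddCommGroup Y] [InnerProductSpace ℝ Y] [CompleteSpace Y] (L : X →L[ℝ] Y)

/-- The asymptotic-regularization flow for data `y`: the gradient flow of `½ ‖L φ - y‖²`. -/
def IsGradientFlow (y : Y) (φ : ℝ → X) : Prop :=
  ∀ t, 0 ≤ t → HasDerivAt φ (-L.adjoint (L (φ t) - y)) t

noncomputable def discrepancyTime (φ : ℝ → X) (y : Y) (r : ℝ) : ℝ :=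
  sInf {t | 0 ≤ t ∧ ‖L (φ t) - y‖ ≤ r}

variable {L} {y y' : Y} {φ ψ : ℝ → X}

theorem IsGradientFlow.sub (hφ : IsGradientFlow L y φ) (hψ : IsGradientFlow L y' ψ) :
    IsGradientFlow L (y - y') (φ - ψ) := fun t ht => by
  convert (hφ t ht).sub (hψ t ht) using 1
  simp only [Pi.sub_apply, map_sub]
  abel

theorem isGradientFlow_add_exp (x v : X) :
    IsGradientFlow L (L x) fun t => x + exp (t • -(L.adjoint ∘L L)) v := fun t _ => by
  convert (hasDerivAt_exp_neg_smul_apply (L.adjoint ∘L L) v t).const_add x using 1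
  simp

theorem IsGradientFlow.hasDerivAt_norm_sub_sq (hφ : IsGradientFlow L y φ) (x : X) {t : ℝ}
    (ht : 0 ≤ t) :
    HasDerivAt (fun s => ‖φ s - x‖ ^ 2) (-2 * ⟪L (φ t) - y, L (φ t - x)⟫) t := by
  refine ((hφ t ht).sub_const x).norm_sq.congr_deriv ?_
  rw [inner_neg_right, ContinuousLinearMap.adjoint_inner_right, real_inner_comm]
  ring

theorem IsGradientFlow.norm_le_of_eq_zero (hφ : IsGradientFlow L y φ) (hφ0 : φ 0 = 0) {t : ℝ}
    (ht : 0 ≤ t) : ‖φ t‖ ≤ ‖y‖ * √(t / 2) := by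
  have hmono : AntitoneOn (fun s => ‖φ s - 0‖ ^ 2 - ‖y‖ ^ 2 / 2 * s) (Ici 0) := by
    refine (convex_Ici 0).antitoneOn_of_hasDerivAt_nonpos
      (fun s hs => ((hφ.hasDerivAt_norm_sub_sq 0 hs).sub
        ((hasDerivAt_id s).const_mul _))) fun s _ => ?_
    have := (abs_le.1 (abs_real_inner_le_norm (L (φ s)) y)).2
    rw [sub_zero, inner_sub_left, real_inner_self_eq_norm_sq, real_inner_comm]
    nlinarith [sq_nonneg (2 * ‖L (φ s)‖ - ‖y‖)]
  have := hmono self_mem_Ici ht ht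
  simp only [hφ0, sub_zero, norm_zero] at this
  rw [← sq_le_sq₀ (norm_nonneg _) (by positivity), mul_pow, Real.sq_sqrt (by positivity)]
  linarith

theorem IsGradientFlow.norm_sub_sub_exp_le (hφ : IsGradientFlow L y φ) (x : X) {t : ℝ}
    (ht : 0 ≤ t) :
    ‖φ t - x - exp (t • -(L.adjoint ∘L L)) (φ 0 - x)‖ ≤ ‖y - L x‖ * √(t / 2) := by
  rw [sub_sub]
  exact (hφ.sub (isGradientFlow_add_exp x (φ 0 - x))).norm_le_of_eq_zero (by simp) ht

variable {x : X} {δ τ : ℝ}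

theorem IsGradientFlow.antitoneOn_norm_sub_sq_add (hφ : IsGradientFlow L y φ)
    (hy : ‖y - L x‖ ≤ δ) {D : Set ℝ} (hD : Convex ℝ D) (hD0 : D ⊆ Ici 0) {ρ : ℝ} (hδρ : δ ≤ ρ)
    (hρ : ∀ t ∈ interior D, ρ ≤ ‖L (φ t) - y‖) :
    AntitoneOn (fun t => ‖φ t - x‖ ^ 2 + 2 * ρ * (ρ - δ) * t) D := by
  refine hD.antitoneOn_of_hasDerivAt_nonpos (fun t ht => (hφ.hasDerivAt_norm_sub_sq x
    (hD0 ht)).add ((hasDerivAt_id t).const_mul _)) fun t ht => ?_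
  have hsplit : L (φ t - x) = (L (φ t) - y) + (y - L x) := by rw [map_sub]; abel
  have hinner := norm_mul_sub_norm_le_inner_add (L (φ t) - y) (y - L x)
  rw [← hsplit] at hinner
  have hres := hρ t ht
  have hpos : 0 ≤ ‖L (φ t) - y‖ + ρ - δ := by linarith [norm_nonneg (L (φ t) - y)]
  nlinarith [mul_le_mul_of_nonneg_left hy (norm_nonneg (L (φ t) - y)),
    mul_nonneg (sub_nonneg.2 hres) hpos]

theorem IsGradientFlow.exists_norm_apply_sub_le (hφ : IsGradientFlow L y φ) (hy : ‖y - L x‖ ≤ δ)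
    (hδ : 0 < δ) (hτ : 1 < τ) : ∃ t, 0 ≤ t ∧ ‖L (φ t) - y‖ ≤ τ * δ := by
  by_contra! hres
  set c := 2 * (τ * δ) * (τ * δ - δ)
  have hgap : 0 < τ * δ - δ := by nlinarith
  have hc : 0 < c := by positivity
  have hmono := hφ.antitoneOn_norm_sub_sq_add hy (convex_Ici 0) subset_rfl
    (by nlinarith : δ ≤ τ * δ) fun t ht => (hres t (interior_subset ht)).le
  have hT : 0 ≤ ‖φ 0 - x‖ ^ 2 / c + 1 := by positivity
  have := hmono self_mem_Ici hT hT
  simp only [mul_zero, add_zero] at this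
  rw [mul_add, mul_div_cancel₀ _ hc.ne', mul_one] at this
  nlinarith [sq_nonneg ‖φ (‖φ 0 - x‖ ^ 2 / c + 1) - x‖]

theorem IsGradientFlow.discrepancyTime_mem (hφ : IsGradientFlow L y φ) (hy : ‖y - L x‖ ≤ δ)
    (hδ : 0 < δ) (hτ : 1 < τ) :
    discrepancyTime L φ y (τ * δ) ∈ {t | 0 ≤ t ∧ ‖L (φ t) - y‖ ≤ τ * δ} := by
  have hcont : ContinuousOn (fun t => ‖L (φ t) - y‖) (Ici 0) := fun t ht =>
    ((L.continuous.continuousAt.comp (hφ t ht).continuousAt).sub continuousAt_const).norm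
      |>.continuousWithinAt
  exact IsClosed.csInf_mem (hcont.preimage_isClosed_of_isClosed isClosed_Ici isClosed_Iic)
    (hφ.exists_norm_apply_sub_le hy hδ hτ) ⟨0, fun _ ht => ht.1⟩

theorem IsGradientFlow.antitoneOn_norm_sub_discrepancyTime (hφ : IsGradientFlow L y φ)
    (hy : ‖y - L x‖ ≤ δ) (hτ : 1 ≤ τ) :
    AntitoneOn (fun t => ‖φ t - x‖) (Icc 0 (discrepancyTime L φ y (τ * δ))) := by
  have hδ : 0 ≤ δ := (norm_nonneg _).trans hy
  have hsq := hφ.antitoneOn_norm_sub_sq_add hy (convex_Icc 0 (discrepancyTime L φ y (τ * δ)))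
    Icc_subset_Ici_self le_rfl fun t ht => by
      rw [interior_Icc] at ht
      have := notMem_of_lt_csInf (s := {t | 0 ≤ t ∧ ‖L (φ t) - y‖ ≤ τ * δ}) ht.2
        ⟨0, fun _ hs => hs.1⟩
      simp only [mem_ofPred_eq, not_and, not_le] at this
      nlinarith [this ht.1.le]
  intro a ha b hb hab
  simpa [sq_le_sq₀] using hsq ha hb hab

theorem IsGradientFlow.norm_sub_discrepancyTime_lt (hφ : IsGradientFlow L y φ) {v : X}
    (hφ0 : φ 0 = v) (hy : ‖y - L x‖ ≤ δ) (hδ : 0 < δ) (hτ : 1 < τ) {T₀ η c : ℝ} (hT₀ : 0 ≤ T₀)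
    (hlate : ‖exp (T₀ • -(L.adjoint ∘L L)) (v - x)‖ < η)
    (hearly : ∀ t ∈ Icc 0 T₀, ‖L (exp (t • -(L.adjoint ∘L L)) (v - x))‖ < c →
      ‖exp (t • -(L.adjoint ∘L L)) (v - x)‖ < η)
    (hc : ‖L‖ * (δ * √(T₀ / 2)) + (τ + 1) * δ < c) :
    ‖φ (discrepancyTime L φ y (τ * δ)) - x‖ < δ * √(T₀ / 2) + η := by
  subst hφ0
  set T := discrepancyTime L φ y (τ * δ)
  set W : ℝ → X := fun t => exp (t • -(L.adjoint ∘L L)) (φ 0 - x)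
  obtain ⟨hT, hres⟩ := hφ.discrepancyTime_mem hy hδ hτ
  have hdev : ∀ t ∈ Icc 0 T₀, ‖φ t - x - W t‖ ≤ δ * √(T₀ / 2) := fun t ht => by
    grw [hφ.norm_sub_sub_exp_le x ht.1, hy, ht.2]
  have hW : ‖W (min T T₀)‖ < η := by
    rcases le_total T T₀ with hTT₀ | hT₀T
    · rw [min_eq_left hTT₀]
      refine hearly T ⟨hT, hTT₀⟩ ?_
      have hsplit : L (W T) = (L (φ T) - y) + (y - L x) - L (φ T - x - W T) := by
        simp only [map_sub]; abel
      calc ‖L (W T)‖ ≤ ‖L (φ T) - y‖ + ‖y - L x‖ + ‖L‖ * ‖φ T - x - W T‖ := by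
            grw [hsplit, norm_sub_le, norm_add_le, L.le_opNorm]
        _ ≤ τ * δ + δ + ‖L‖ * (δ * √(T₀ / 2)) := by
            grw [hres, hy, hdev T ⟨hT, hTT₀⟩]
        _ < c := by linarith
    · rwa [min_eq_right hT₀T]
  have hmin : min T T₀ ∈ Icc 0 T₀ := ⟨le_min hT hT₀, min_le_right _ _⟩
  calc ‖φ T - x‖ ≤ ‖φ (min T T₀) - x‖ :=
        hφ.antitoneOn_norm_sub_discrepancyTime hy hτ.le ⟨hmin.1, min_le_left _ _⟩
          ⟨hT, le_rfl⟩ (min_le_left _ _)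
    _ ≤ ‖φ (min T T₀) - x - W (min T T₀)‖ + ‖W (min T T₀)‖ := norm_le_norm_sub_add _ _
    _ < δ * √(T₀ / 2) + η := by linarith [hdev _ hmin]

end GradientFlow

theorem IsCompact.exists_pos_forall_norm_lt_of_injective {α 𝕜 E F : Type*} [TopologicalSpace α]
    [NontriviallyNormedField 𝕜] [NormedAddCommGroup E] [NormedSpace 𝕜 E] [NormedAddCommGroup F]
    [NormedSpace 𝕜 F] {K : Set α} (hK : IsCompact K) {f : α → E} (hf : Continuous f)
    {L : E →L[𝕜] F} (hL : Function.Injective L) {η : ℝ} (hη : 0 < η) :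
    ∃ c > 0, ∀ t ∈ K, ‖L (f t)‖ < c → ‖f t‖ < η := by
  obtain ⟨c, hc, hmin⟩ := (hK.inter_right (isClosed_le continuous_const hf.norm)).exists_forall_le'
    (L.continuous.comp hf).norm.continuousOn (a := 0) fun t ht => by
      rw [norm_pos_iff, Function.comp_apply, map_ne_zero_iff L hL, ← norm_pos_iff]
      exact hη.trans_le ht.2
  exact ⟨c, hc, fun t ht hlt => not_le.1 fun hge => (hmin t ⟨ht, hge⟩).not_gt hlt⟩

/-- Stability: with `L` injective, `τ > 1`, noise levels
`δₖ → 0`, noisy data `yₖ` with `‖yₖ − L φ̄‖ ≤ δₖ`, and flows `φₖ` for the data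
`yₖ` all starting at `φ₀`, the approximations `φₖ(Tₖ)` at the (finite)
discrepancy-principle stopping times `Tₖ = inf{t ≥ 0 : ‖L φₖ(t) − yₖ‖ ≤ τ δₖ}`
converge strongly to `φ̄`. -/
theorem noisy_flow_stability
    {X Y : Type*}
    [NormedAddCommGroup X] [InnerProductSpace ℝ X] [CompleteSpace X]
    [NormedAddCommGroup Y] [InnerProductSpace ℝ Y] [CompleteSpace Y]
    (L : X →L[ℝ] Y) (hL : Function.Injective L)
    (τ : ℝ) (hτ : 1 < τ) (φ0 φbar : X)
    (δ : ℕ → ℝ) (hδpos : ∀ k, 0 < δ k)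
    (hδ0 : Filter.Tendsto δ Filter.atTop (nhds 0))
    (y : ℕ → Y) (hnoise : ∀ k, ‖y k - L φbar‖ ≤ δ k)
    (φ : ℕ → ℝ → X) (hinit : ∀ k, φ k 0 = φ0)
    (hflow : ∀ k, ∀ t : ℝ, 0 ≤ t →
      HasDerivAt (φ k) (-(L.adjoint (L (φ k t) - y k))) t) :
    Filter.Tendsto
      (fun k => φ k (sInf {t : ℝ | 0 ≤ t ∧ ‖L (φ k t) - y k‖ ≤ τ * δ k}))
      Filter.atTop (nhds φbar) := by
  set W : ℝ → X := fun t => exp (t • -(L.adjoint ∘L L)) (φ0 - φbar)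
  rw [Metric.tendsto_nhds]
  intro ε hε
  have hWlim : Tendsto W atTop (𝓝 0) :=
    L.isPositive_adjoint_comp_self.tendsto_exp_neg_smul_apply
      (L.adjoint_comp_self_injective_iff.2 hL) _
  obtain ⟨T₀, hWT₀, hT₀⟩ :=
    ((hWlim.eventually (Metric.ball_mem_nhds 0 (half_pos hε))).and (eventually_ge_atTop 0)).exists
  obtain ⟨c, hc, hWc⟩ := (isCompact_Icc (a := 0) (b := T₀)).exists_pos_forall_norm_lt_of_injective
    (continuous_exp_neg_smul_apply _ (φ0 - φbar)) hL (half_pos hε)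
  have hdev : Tendsto (fun k => δ k * √(T₀ / 2)) atTop (𝓝 0) := by
    simpa using hδ0.mul_const √(T₀ / 2)
  have hbound : Tendsto (fun k => ‖L‖ * (δ k * √(T₀ / 2)) + (τ + 1) * δ k) atTop (𝓝 0) := by
    simpa using (hdev.const_mul ‖L‖).add (hδ0.const_mul (τ + 1))
  filter_upwards [hdev.eventually_lt_const (half_pos hε), hbound.eventually_lt_const hc]
    with k hk hkc
  rw [dist_zero_right] at hWT₀
  rw [dist_eq_norm]
  exact (IsGradientFlow.norm_sub_discrepancyTime_lt (hflow k) (hinit k) (hnoise k) (hδpos k) hτ hT₀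
    hWT₀ hWc hkc).trans (by linarith)
end

section
/- Assume L is injective and let A := L* ∘ L : X → X. Then for every x ∈ X, the semigroup orbit satisfies ‖exp(−t A) x‖ → 0 as t → ∞, where exp denotes the exponential of bounded operators on X. -/
open Filter NormedSpace ContinuousLinearMap
open scoped RealInnerProductSpace Topology

/-!
Write `u t = exp (-(t • A)) x`. Self-adjointness and the semigroup law give
`⟪u s, u t⟫ = g (s + t)` with `g t = ⟪x, u t⟫`, hence
`‖u s - u t‖² = g (2s) + g (2t) - 2 g (s + t)`. Since `A = L† L ≥ 0`, the energy
`‖u t‖² = g (2t)` is nonincreasing, so `g` converges and `u` is Cauchy. Its limit `z` is fixed by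
the semigroup, so `A z = 0`, i.e. `L z = 0`, and `z = 0` by injectivity.
-/

section BanachAlgebra

variable {𝕂 𝔸 : Type*} [RCLike 𝕂] [NormedRing 𝔸] [NormedAlgebra 𝕂 𝔸] [CompleteSpace 𝔸]

theorem exp_add_smul (a : 𝔸) (s t : 𝕂) : exp ((s + t) • a) = exp (s • a) * exp (t • a) := by
  have hball (b : 𝔸) : b ∈ Metric.eball 0 (expSeries 𝕂 𝔸).radius :=
    (expSeries_radius_eq_top 𝕂 𝔸).symm ▸ edist_lt_top _ _
  rw [add_smul]
  exact exp_add_of_commute_of_mem_ball (((Commute.refl a).smul_left s).smul_right t)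
    (hball _) (hball _)

end BanachAlgebra

section BanachSpace

variable {E : Type*} [NormedAddCommGroup E] [NormedSpace ℝ E] [CompleteSpace E]

theorem hasDerivAt_exp_smul_apply (B : E →L[ℝ] E) (x : E) (t : ℝ) :
    HasDerivAt (fun s : ℝ => exp (s • B) x) (B (exp (t • B) x)) t := by
  simpa using (hasDerivAt_exp_smul_const' B t).clm_apply (hasDerivAt_const t x)

theorem exp_smul_apply_eq_self_of_tendsto {B : E →L[ℝ] E} {x z : E}
    (h : Tendsto (fun t : ℝ => exp (t • B) x) atTop (𝓝 z)) (s : ℝ) : exp (s • B) z = z := by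
  have hshift : Tendsto (fun t : ℝ => exp ((s + t) • B) x) atTop (𝓝 z) :=
    h.comp (tendsto_atTop_add_const_left _ s tendsto_id)
  simp only [exp_add_smul B s] at hshift
  exact tendsto_nhds_unique (((exp (s • B)).continuous.tendsto z).comp h) hshift

theorem apply_eq_zero_of_tendsto_exp_smul_apply {B : E →L[ℝ] E} {x z : E}
    (h : Tendsto (fun t : ℝ => exp (t • B) x) atTop (𝓝 z)) : B z = 0 := by
  have hderiv := hasDerivAt_exp_smul_apply B z 0
  simp only [exp_smul_apply_eq_self_of_tendsto h, zero_smul, exp_zero] at hderiv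
  exact hderiv.unique (hasDerivAt_const 0 z)

end BanachSpace

section Hilbert

variable {X : Type*} [NormedAddCommGroup X] [InnerProductSpace ℝ X] [CompleteSpace X]

theorem exists_tendsto_of_inner_eq_comp_add {u : ℝ → X} {g : ℝ → ℝ} {c : ℝ}
    (hu : ∀ s t, ⟪u s, u t⟫ = g (s + t)) (hg : Tendsto g atTop (𝓝 c)) :
    ∃ z, Tendsto u atTop (𝓝 z) := by
  have hdist_sq : ∀ p : ℝ × ℝ,
      dist (u p.1) (u p.2) ^ 2 = g (p.1 + p.1) + g (p.2 + p.2) - 2 * g (p.1 + p.2) := by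
    intro p
    rw [dist_eq_norm, ← real_inner_self_eq_norm_sq, inner_sub_sub_self, hu, hu, hu, hu,
      add_comm p.2]
    ring
  have hsum : Tendsto (fun p : ℝ × ℝ => p.1 + p.2) (atTop ×ˢ atTop) atTop :=
    tendsto_fst.atTop_add_atTop tendsto_snd
  have hsq : Tendsto (fun p : ℝ × ℝ => dist (u p.1) (u p.2) ^ 2) (atTop ×ˢ atTop) (𝓝 0) := by
    have := ((hg.comp (tendsto_fst.atTop_add_atTop tendsto_fst)).add
      (hg.comp (tendsto_snd.atTop_add_atTop tendsto_snd))).sub ((hg.comp hsum).const_mul 2)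
    rw [show c + c - 2 * c = 0 by ring] at this
    exact this.congr fun p => (hdist_sq p).symm
  have hcauchy : CauchySeq u := by
    rw [cauchySeq_iff_tendsto_dist_atTop_0, ← prod_atTop_atTop_eq]
    simpa using hsq.sqrt
  exact cauchySeq_tendsto_of_complete hcauchy

namespace ContinuousLinearMap

theorem inner_exp_smul_apply_exp_smul_apply {B : X →L[ℝ] X} (hB : IsSelfAdjoint B) (x : X)
    (s t : ℝ) : ⟪exp (s • B) x, exp (t • B) x⟫ = ⟪x, exp ((s + t) • B) x⟫ := by
  have hexp : IsSelfAdjoint (exp (s • B)) := (IsSelfAdjoint.all s |>.smul hB).exp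
  rw [← hexp.adjoint_eq, adjoint_inner_left, exp_add_smul B s t]
  rfl

theorem IsPositive.antitone_norm_sq_exp_neg_smul_apply {A : X →L[ℝ] X} (hA : A.IsPositive)
    (x : X) : Antitone fun t : ℝ => ‖exp (-(t • A)) x‖ ^ 2 := by
  have hderiv (t : ℝ) : HasDerivAt (fun s : ℝ => ‖exp (-(s • A)) x‖ ^ 2)
      (-(2 * ⟪A (exp (-(t • A)) x), exp (-(t • A)) x⟫)) t := by
    simpa [smul_neg, real_inner_comm] using (hasDerivAt_exp_smul_apply (-A) x t).norm_sq
  refine antitone_of_deriv_nonpos (fun t => (hderiv t).differentiableAt) fun t => ?_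
  rw [(hderiv t).deriv]
  linarith [hA.inner_nonneg_left (exp (-(t • A)) x)]

theorem IsPositive.exists_tendsto_exp_neg_smul_apply {A : X →L[ℝ] X} (hA : A.IsPositive)
    (x : X) : ∃ z, A z = 0 ∧ Tendsto (fun t : ℝ => exp (-(t • A)) x) atTop (𝓝 z) := by
  set u : ℝ → X := fun t => exp (-(t • A)) x
  have hu (s t : ℝ) : ⟪u s, u t⟫ = ⟪x, u (s + t)⟫ := by
    simpa [u, smul_neg] using inner_exp_smul_apply_exp_smul_apply hA.isSelfAdjoint.neg x s t
  have henergy : Tendsto (fun t => ‖u t‖ ^ 2) atTop (𝓝 (⨅ t, ‖u t‖ ^ 2)) :=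
    tendsto_atTop_ciInf (hA.antitone_norm_sq_exp_neg_smul_apply x) ⟨0, by
      rintro _ ⟨t, rfl⟩; positivity⟩
  have hg : Tendsto (fun t => ⟪x, u t⟫) atTop (𝓝 (⨅ t, ‖u t‖ ^ 2)) := by
    refine (henergy.comp (tendsto_id.atTop_div_const two_pos)).congr fun t => ?_
    simp only [Function.comp_apply, id, ← real_inner_self_eq_norm_sq, hu, add_halves]
  obtain ⟨z, hz⟩ := exists_tendsto_of_inner_eq_comp_add hu hg
  have hAz : (-A) z = 0 := apply_eq_zero_of_tendsto_exp_smul_apply (by simpa [smul_neg] using hz)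
  exact ⟨z, by simpa using hAz, hz⟩

end ContinuousLinearMap

end Hilbert

/-- If `L` is injective and `A = L* ∘ L`, then every semigroup
orbit decays: `‖exp(−t A) x‖ → 0` as `t → ∞`, for every `x ∈ X`. -/
theorem exp_orbit_decay
    {X Y : Type*}
    [NormedAddCommGroup X] [InnerProductSpace ℝ X] [CompleteSpace X]
    [NormedAddCommGroup Y] [InnerProductSpace ℝ Y] [CompleteSpace Y]
    (L : X →L[ℝ] Y) (hL : Function.Injective L)
    (A : X →L[ℝ] X) (hA : A = L.adjoint.comp L) :
    ∀ x : X,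
      Filter.Tendsto (fun t : ℝ => ‖(NormedSpace.exp (-(t • A))) x‖)
        Filter.atTop (nhds 0) := by
  intro x
  obtain ⟨z, hAz, hz⟩ :=
    (hA ▸ isPositive_adjoint_comp_self L).exists_tendsto_exp_neg_smul_apply x
  have hLz : z ∈ L.ker := by
    rw [← ker_adjoint_comp_self, ← hA]
    exact hAz
  have hz0 : z = 0 := hL (by simpa using hLz)
  simpa [hz0] using hz.norm
end
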